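/- arXiv:1905.13556 — 2 statements merged into one kernel-verified Lean document; each statement's English description precedes it below -/
import Mathlib

section
/- Let W : (0,∞) → ℝ be continuous with W integrable near 0, satisfying the Volterra equation W(t) = 2h₀/√(πt) − (2λ/(√π · t))∫₀^t W(τ)√(t−τ) dτ for all t > 0, where h₀ > 0 and λ ∈ ℝ. Then the Laplace transform Q(s) = ∫₀^∞ e^{−st}W(t) dt satisfies the ODE Q'(s) − (λ/s^{3/2})Q(s) = −h₀/s^{3/2} for s > 0 with Q(s) → 0 as s → ∞. -/
open Real MeasureTheory Filter

lemma lap_sqrt_integrable {s : ℝ} (hs : 0 < s) :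
    MeasureTheory.IntegrableOn (fun u => Real.sqrt u * Real.exp (-s * u)) (Set.Ioi 0) := by
  have h := integrableOn_rpow_mul_exp_neg_mul_rpow (s := (1/2:ℝ)) (p := 1) (b := s)
    (by norm_num) one_pos hs
  refine h.congr_fun (fun x hx => ?_) measurableSet_Ioi
  dsimp only
  rw [Real.rpow_one, ← Real.sqrt_eq_rpow]

lemma lap_sqrt_integral {s : ℝ} (hs : 0 < s) :
    ∫ u in Set.Ioi (0:ℝ), Real.sqrt u * Real.exp (-s * u)
      = Real.sqrt π / 2 / s ^ ((3:ℝ)/2) := by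
  have h := Real.integral_rpow_mul_exp_neg_mul_Ioi (a := (3/2:ℝ)) (r := s) (by norm_num) hs
  have h2 : Real.Gamma (3/2) = Real.sqrt π / 2 := by
    rw [show (3/2:ℝ) = 1/2 + 1 by norm_num,
      Real.Gamma_add_one (by norm_num : (1/2:ℝ) ≠ 0), Real.Gamma_one_half_eq]
    ring
  rw [show ∫ u in Set.Ioi (0:ℝ), Real.sqrt u * Real.exp (-s * u)
      = ∫ t in Set.Ioi (0:ℝ), t ^ ((3/2:ℝ) - 1) * Real.exp (-(s * t)) from
    setIntegral_congr_fun measurableSet_Ioi (fun x hx => by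
      rw [show (3/2:ℝ) - 1 = 1/2 by norm_num, ← Real.sqrt_eq_rpow, neg_mul]), h, h2,
    Real.div_rpow (by norm_num) hs.le, Real.one_rpow]
  ring

lemma moment_eq (h₀ lam : ℝ) (W : ℝ → ℝ)
    (hVolt : ∀ t : ℝ, 0 < t →
      W t = 2 * h₀ / Real.sqrt (π * t)
        - (2 * lam / (Real.sqrt π * t)) * ∫ τ in (0:ℝ)..t, W τ * Real.sqrt (t - τ))
    (hLap : ∀ s : ℝ, 0 < s →
      MeasureTheory.Integrable (fun t => Real.exp (-s * t) * W t)
        (MeasureTheory.volume.restrict (Set.Ioi 0)))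
    {s : ℝ} (hs : 0 < s) :
    MeasureTheory.IntegrableOn (fun t => t * (Real.exp (-s * t) * W t)) (Set.Ioi 0) ∧
    ∫ t in Set.Ioi (0:ℝ), t * (Real.exp (-s * t) * W t)
      = h₀ / s ^ ((3:ℝ)/2)
        - lam / s ^ ((3:ℝ)/2) * ∫ t in Set.Ioi (0:ℝ), Real.exp (-s * t) * W t := by
  have hf : MeasureTheory.IntegrableOn (fun τ => Real.exp (-s * τ) * W τ) (Set.Ioi 0) :=
    hLap s hs
  have hg := lap_sqrt_integrable hs
  set f : ℝ → ℝ := fun τ => Real.exp (-s * τ) * W τ with hfdef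
  set g : ℝ → ℝ := fun u => Real.sqrt u * Real.exp (-s * u) with hgdef
  have L := ContinuousLinearMap.mul ℝ ℝ
  -- convolution integrability
  have hconv_int : MeasureTheory.IntegrableOn
      (fun x => ∫ t in (0:ℝ)..x, f t * g (x - t)) (Set.Ioi 0) := by
    have h := MeasureTheory.integrable_posConvolution hf hg (ContinuousLinearMap.mul ℝ ℝ)
    rw [MeasureTheory.posConvolution] at h
    simp_rw [ContinuousLinearMap.mul_apply'] at h
    rwa [MeasureTheory.integrable_indicator_iff measurableSet_Ioi] at h
  have hconv_eq : ∫ x in Set.Ioi (0:ℝ), ∫ t in (0:ℝ)..x, f t * g (x - t)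
      = (∫ x in Set.Ioi (0:ℝ), f x) * (∫ x in Set.Ioi (0:ℝ), g x) := by
    have h := MeasureTheory.integral_posConvolution hf hg (ContinuousLinearMap.mul ℝ ℝ)
    simpa [ContinuousLinearMap.mul_apply'] using h
  -- pointwise identity
  have key : ∀ t ∈ Set.Ioi (0:ℝ),
      (2 * h₀ / Real.sqrt π) * g t
        - (2 * lam / Real.sqrt π) * ∫ τ in (0:ℝ)..t, f τ * g (t - τ)
      = t * f t := by
    intro t ht
    rw [Set.mem_Ioi] at ht
    have hinner : ∫ τ in (0:ℝ)..t, f τ * g (t - τ)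
        = Real.exp (-s * t) * ∫ τ in (0:ℝ)..t, W τ * Real.sqrt (t - τ) := by
      rw [← intervalIntegral.integral_const_mul]
      apply intervalIntegral.integral_congr
      intro τ _
      simp only [f, g]
      rw [show Real.exp (-s * τ) * W τ * (Real.sqrt (t - τ) * Real.exp (-s * (t - τ)))
          = Real.exp (-s * τ) * Real.exp (-s * (t - τ)) * (W τ * Real.sqrt (t - τ)) from by ring,
        ← Real.exp_add, show -s * τ + -s * (t - τ) = -s * t from by ring]
    rw [hinner]
    simp only [f, g]
    rw [hVolt t ht]
    have h1 : Real.sqrt (π * t) = Real.sqrt π * Real.sqrt t := Real.sqrt_mul pi_pos.le t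
    have h2 : Real.sqrt t * Real.sqrt t = t := Real.mul_self_sqrt ht.le
    have h3 : (0:ℝ) < Real.sqrt π := Real.sqrt_pos.mpr pi_pos
    have h4 : (0:ℝ) < Real.sqrt t := Real.sqrt_pos.mpr ht
    set G := ∫ τ in (0:ℝ)..t, W τ * Real.sqrt (t - τ)
    rw [h1]
    simp only [neg_mul]
    field_simp
    linear_combination h₀ * h2
  have hint1 : MeasureTheory.IntegrableOn
      (fun t => (2 * h₀ / Real.sqrt π) * g t) (Set.Ioi 0) := hg.const_mul _
  have hint2 : MeasureTheory.IntegrableOn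
      (fun t => (2 * lam / Real.sqrt π) * ∫ τ in (0:ℝ)..t, f τ * g (t - τ)) (Set.Ioi 0) :=
    hconv_int.const_mul _
  have hmom_int : MeasureTheory.IntegrableOn (fun t => t * f t) (Set.Ioi 0) := by
    refine (hint1.sub hint2).congr ?_
    filter_upwards [MeasureTheory.ae_restrict_mem measurableSet_Ioi] with t ht
    simpa using key t ht
  refine ⟨hmom_int, ?_⟩
  have hI : ∫ t in Set.Ioi (0:ℝ), t * f t
      = ∫ t in Set.Ioi (0:ℝ), ((2 * h₀ / Real.sqrt π) * g t
        - (2 * lam / Real.sqrt π) * ∫ τ in (0:ℝ)..t, f τ * g (t - τ)) :=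
    (setIntegral_congr_fun measurableSet_Ioi key).symm
  rw [hI, MeasureTheory.integral_sub hint1 hint2, MeasureTheory.integral_const_mul,
    MeasureTheory.integral_const_mul, hconv_eq, lap_sqrt_integral hs]
  have h3 : (0:ℝ) < Real.sqrt π := Real.sqrt_pos.mpr pi_pos
  have h5 : (0:ℝ) < s ^ ((3:ℝ)/2) := Real.rpow_pos_of_pos hs _
  field_simp

theorem stmt_11 (h₀ lam : ℝ) (hh₀ : 0 < h₀) (W : ℝ → ℝ)
    (hWcont : ContinuousOn W (Set.Ioi 0))
    (hWint : MeasureTheory.IntegrableOn W (Set.Ioc (0:ℝ) 1))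
    (hVolt : ∀ t : ℝ, 0 < t →
      W t = 2 * h₀ / Real.sqrt (π * t)
        - (2 * lam / (Real.sqrt π * t)) * ∫ τ in (0:ℝ)..t, W τ * Real.sqrt (t - τ))
    (hLap : ∀ s : ℝ, 0 < s →
      MeasureTheory.Integrable (fun t => Real.exp (-s * t) * W t)
        (MeasureTheory.volume.restrict (Set.Ioi 0))) :
    (∀ s : ℝ, 0 < s →
      HasDerivAt (fun s => ∫ t in Set.Ioi (0:ℝ), Real.exp (-s * t) * W t)
        (lam / s ^ ((3:ℝ)/2) * (∫ t in Set.Ioi (0:ℝ), Real.exp (-s * t) * W t)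
          - h₀ / s ^ ((3:ℝ)/2)) s) ∧
    Tendsto (fun s => ∫ t in Set.Ioi (0:ℝ), Real.exp (-s * t) * W t)
      atTop (nhds 0) := by
  constructor
  · intro s hs
    have hs4 : 0 < s / 4 := by linarith
    -- dominated differentiation
    have hmeas : ∀ᶠ σ in nhds s, AEStronglyMeasurable
        (fun t => Real.exp (-σ * t) * W t) (volume.restrict (Set.Ioi 0)) := by
      filter_upwards [eventually_gt_nhds hs] with σ hσ
      exact (hLap σ hσ).aestronglyMeasurable
    have hF_int := hLap s hs
    have hF'_meas : AEStronglyMeasurable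
        (fun t => -(t * (Real.exp (-s * t) * W t))) (volume.restrict (Set.Ioi 0)) :=
      (aestronglyMeasurable_id.mul (hLap s hs).aestronglyMeasurable).neg
    have hbound_int : Integrable
        (fun t => (4 / s) * ‖Real.exp (-(s/4) * t) * W t‖)
        (volume.restrict (Set.Ioi 0)) := ((hLap (s/4) hs4).norm).const_mul _
    have h_bound : ∀ᵐ t ∂(volume.restrict (Set.Ioi 0)),
        ∀ σ ∈ Metric.ball s (s/2),
          ‖-(t * (Real.exp (-σ * t) * W t))‖ ≤ (4 / s) * ‖Real.exp (-(s/4) * t) * W t‖ := by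
      rw [MeasureTheory.ae_restrict_iff' measurableSet_Ioi]
      refine MeasureTheory.ae_of_all _ fun t ht σ hσ => ?_
      rw [Set.mem_Ioi] at ht
      rw [Real.ball_eq_Ioo] at hσ
      have hσ2 : s / 2 < σ := by have := hσ.1; linarith
      have hWt := abs_nonneg (W t)
      have e1 : Real.exp (-σ * t) ≤ Real.exp (-(s/2) * t) := by
        apply Real.exp_le_exp.2
        nlinarith
      have e2 : t * Real.exp (-(s/4) * t) ≤ 4 / s := by
        rw [show -(s/4) * t = -((s/4) * t) by ring, Real.exp_neg,
          ← div_eq_mul_inv, div_le_div_iff₀ (Real.exp_pos _) (by positivity)]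
        have := Real.add_one_le_exp ((s/4) * t)
        nlinarith [Real.exp_pos ((s/4)*t)]
      have e3 : Real.exp (-(s/2) * t) = Real.exp (-(s/4) * t) * Real.exp (-(s/4) * t) := by
        rw [← Real.exp_add]; ring_nf
      calc ‖-(t * (Real.exp (-σ * t) * W t))‖
          = t * (Real.exp (-σ * t) * |W t|) := by
            rw [norm_neg, norm_mul, norm_mul, Real.norm_eq_abs, Real.norm_eq_abs,
              Real.norm_eq_abs, abs_of_pos ht, abs_of_pos (Real.exp_pos _)]
        _ ≤ t * (Real.exp (-(s/2) * t) * |W t|) := by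
            apply mul_le_mul_of_nonneg_left _ ht.le
            exact mul_le_mul_of_nonneg_right e1 hWt
        _ = (t * Real.exp (-(s/4) * t)) * (Real.exp (-(s/4) * t) * |W t|) := by
            rw [e3]; ring
        _ ≤ (4 / s) * (Real.exp (-(s/4) * t) * |W t|) := by
            apply mul_le_mul_of_nonneg_right e2 (by positivity)
        _ = (4 / s) * ‖Real.exp (-(s/4) * t) * W t‖ := by
            rw [norm_mul, Real.norm_eq_abs, Real.norm_eq_abs,
              abs_of_pos (Real.exp_pos _)]
    have h_diff : ∀ᵐ t ∂(volume.restrict (Set.Ioi 0)),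
        ∀ σ ∈ Metric.ball s (s/2),
          HasDerivAt (fun σ => Real.exp (-σ * t) * W t)
            (-(t * (Real.exp (-σ * t) * W t))) σ := by
      refine MeasureTheory.ae_of_all _ fun t σ _ => ?_
      have h1 : HasDerivAt (fun σ : ℝ => -σ * t) (-t) σ := by
        simpa using ((hasDerivAt_id σ).neg.mul_const t)
      have h2 := (h1.exp).mul_const (W t)
      refine h2.congr_deriv ?_
      ring
    have key := hasDerivAt_integral_of_dominated_loc_of_deriv_le
      (F := fun σ t => Real.exp (-σ * t) * W t)
      (F' := fun σ t => -(t * (Real.exp (-σ * t) * W t)))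
      (bound := fun t => (4 / s) * ‖Real.exp (-(s/4) * t) * W t‖)
      (Metric.ball_mem_nhds s (half_pos hs)) hmeas hF_int hF'_meas h_bound hbound_int h_diff
    have hd := key.2
    rw [MeasureTheory.integral_neg, (moment_eq h₀ lam W hVolt hLap hs).2] at hd
    refine hd.congr_deriv ?_
    ring
  · -- Tendsto at top
    have := MeasureTheory.tendsto_integral_filter_of_dominated_convergence
      (F := fun (σ : ℝ) (t : ℝ) => Real.exp (-σ * t) * W t)
      (f := fun _ => (0:ℝ)) (μ := volume.restrict (Set.Ioi 0)) (l := atTop)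
      (bound := fun t => ‖Real.exp (-1 * t) * W t‖)
      (by
        filter_upwards [eventually_gt_atTop (0:ℝ)] with σ hσ
        exact (hLap σ hσ).aestronglyMeasurable)
      (by
        filter_upwards [eventually_ge_atTop (1:ℝ)] with σ hσ
        rw [MeasureTheory.ae_restrict_iff' measurableSet_Ioi]
        refine MeasureTheory.ae_of_all _ fun t ht => ?_
        rw [Set.mem_Ioi] at ht
        simp only [norm_mul, Real.norm_eq_abs, abs_of_pos (Real.exp_pos _)]
        have : Real.exp (-σ * t) ≤ Real.exp (-1 * t) := by
          apply Real.exp_le_exp.2; nlinarith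
        exact mul_le_mul_of_nonneg_right this (abs_nonneg _))
      ((hLap 1 one_pos).norm)
      (by
        rw [MeasureTheory.ae_restrict_iff' measurableSet_Ioi]
        refine MeasureTheory.ae_of_all _ fun t ht => ?_
        rw [Set.mem_Ioi] at ht
        have h1 : Tendsto (fun σ : ℝ => -σ * t) atTop atBot := by
          have h0 : Tendsto (fun σ : ℝ => σ * t) atTop atTop := by
            simpa using (tendsto_id (α := ℝ)).atTop_mul_const ht
          have h := Filter.tendsto_neg_atBot_iff (f := fun σ : ℝ => σ * t) (l := atTop) |>.mpr h0
          simpa [neg_mul] using h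
        have h2 : Tendsto (fun σ : ℝ => Real.exp (-σ * t)) atTop (nhds 0) :=
          Real.tendsto_exp_atBot.comp h1
        simpa using h2.mul_const (W t))
    simpa using this
end

section
/- Define W₀(t) = 2h₀/√(πt) and recursively Wₙ(t) = −(2λ/(t√π))∫₀^t W_{n−1}(τ)√(t−τ) dτ for n ≥ 1, where h₀ > 0, λ ∈ ℝ, t > 0. Then for all n ≥ 1: W_{2n}(t) = (2h₀/√(πt)) · (4λ²t)ⁿ/((2n+1)·n!·((2n−1)!!)²) and W_{2n+1}(t) = −2λh₀ · (2λ²t)ⁿ/((n+1)·(n!)²·(2n+1)!!); moreover W₁(t) = −2λh₀. -/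
open Real MeasureTheory Nat

lemma real_beta {u v a : ℝ} (hu : 0 < u) (hv : 0 < v) (ha : 0 < a) :
    ∫ x in (0:ℝ)..a, x ^ (u - 1) * (a - x) ^ (v - 1) =
      a ^ (u + v - 1) * (Real.Gamma u * Real.Gamma v / Real.Gamma (u + v)) := by
  have key := Complex.Gamma_mul_Gamma_eq_betaIntegral (s := (u:ℂ)) (t := (v:ℂ))
    (by simpa using hu) (by simpa using hv)
  have hne : Complex.Gamma ((u:ℂ) + (v:ℂ)) ≠ 0 :=
    Complex.Gamma_ne_zero_of_re_pos (by simp [Complex.add_re]; positivity)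
  have h2 : Complex.betaIntegral u v =
      Complex.Gamma u * Complex.Gamma v / Complex.Gamma ((u:ℂ) + v) := by
    rw [eq_div_iff hne, mul_comm]
    exact key.symm
  have hbeta : Complex.betaIntegral u v =
      ((Real.Gamma u * Real.Gamma v / Real.Gamma (u + v) : ℝ) : ℂ) := by
    rw [h2, show ((u:ℂ) + v) = ((u + v : ℝ) : ℂ) by push_cast; ring,
      Complex.Gamma_ofReal, Complex.Gamma_ofReal, Complex.Gamma_ofReal]
    push_cast
    ring
  have scaled := Complex.betaIntegral_scaled (u:ℂ) (v:ℂ) ha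
  have hL : ((∫ x in (0:ℝ)..a, x ^ (u - 1) * (a - x) ^ (v - 1) : ℝ) : ℂ)
      = ∫ x in (0:ℝ)..a, (x:ℂ) ^ ((u:ℂ) - 1) * ((a:ℂ) - x) ^ ((v:ℂ) - 1) := by
    rw [← intervalIntegral.integral_ofReal]
    refine intervalIntegral.integral_congr fun x hx => ?_
    rw [Set.uIcc_of_le ha.le] at hx
    rw [Complex.ofReal_mul, Complex.ofReal_cpow hx.1 (u - 1),
      Complex.ofReal_cpow (sub_nonneg.mpr hx.2) (v - 1)]
    push_cast
    ring
  apply Complex.ofReal_injective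
  rw [hL, scaled, hbeta, show ((u:ℂ) + v - 1) = ((u + v - 1 : ℝ) : ℂ) by push_cast; ring,
    ← Complex.ofReal_cpow ha.le]
  push_cast
  ring

lemma gamma_half (n : ℕ) :
    Real.Gamma ((n:ℝ) + 1/2) * ((2 * (n:ℝ) + 1) * 2 ^ n) =
      (((2 * n + 1)‼ : ℕ) : ℝ) * Real.sqrt π := by
  induction n with
  | zero => norm_num [Real.Gamma_one_half_eq, Nat.doubleFactorial]
  | succ n ih =>
    have hd : ((2 * (n+1) + 1)‼ : ℕ) = (2*n+3) * ((2*n+1)‼) := by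
      rw [show 2*(n+1)+1 = (2*n+1)+2 from by ring, Nat.doubleFactorial_add_two]
    have h : ((n+1:ℕ):ℝ) + 1/2 = ((n:ℝ) + 1/2) + 1 := by push_cast; ring
    rw [hd, h, Real.Gamma_add_one (by positivity)]
    push_cast
    push_cast at ih
    linear_combination (2*(n:ℝ)+3) * ih

lemma gamma_3_2 : Real.Gamma (3/2 : ℝ) = Real.sqrt π / 2 := by
  rw [show (3/2:ℝ) = 1/2 + 1 by norm_num, Real.Gamma_add_one (by norm_num),
    Real.Gamma_one_half_eq]
  ring

lemma intA (n : ℕ) {t : ℝ} (ht : 0 < t) :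
    ∫ τ in (0:ℝ)..t, τ ^ n / Real.sqrt (π * τ) * Real.sqrt (t - τ)
      = Real.sqrt π * (((2 * n + 1)‼ : ℕ) : ℝ) * t ^ (n + 1) /
        ((2 * (n:ℝ) + 1) * 2 ^ (n + 1) * (((n + 1)! : ℕ) : ℝ)) := by
  have h1 : ∫ τ in (0:ℝ)..t, τ ^ n / Real.sqrt (π * τ) * Real.sqrt (t - τ)
      = ∫ τ in (0:ℝ)..t, (1 / Real.sqrt π) *
          (τ ^ (((n:ℝ) + 1/2) - 1) * (t - τ) ^ ((3/2:ℝ) - 1)) := by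
    refine intervalIntegral.integral_congr_ae (MeasureTheory.ae_of_all _ fun τ hτ => ?_)
    rw [Set.uIoc_of_le ht.le] at hτ
    rw [Real.sqrt_mul pi_pos.le, Real.sqrt_eq_rpow τ, Real.sqrt_eq_rpow (t - τ),
      ← Real.rpow_natCast τ n, show ((n:ℝ) + 1/2) - 1 = (n:ℝ) - 1/(2:ℝ) by ring,
      Real.rpow_sub hτ.1, show (3/2:ℝ) - 1 = 1/(2:ℝ) by norm_num]
    ring
  rw [h1, intervalIntegral.integral_const_mul,
    real_beta (by positivity) (by norm_num) ht,
    show (n:ℝ) + 1/2 + 3/2 - 1 = ((n+1:ℕ):ℝ) by push_cast; ring,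
    Real.rpow_natCast,
    show Real.Gamma ((n:ℝ) + 1/2 + 3/2) = Real.Gamma (((n+1:ℕ):ℝ) + 1) by
      norm_num; ring_nf,
    Real.Gamma_nat_eq_factorial, gamma_3_2]
  have hg := gamma_half n
  have hΓ : Real.Gamma ((n:ℝ) + 1/2) =
      (((2 * n + 1)‼ : ℕ) : ℝ) * Real.sqrt π / ((2 * (n:ℝ) + 1) * 2 ^ n) := by
    rw [eq_div_iff (by positivity)]
    exact hg
  rw [hΓ]
  have h2 : (0:ℝ) < Real.sqrt π := Real.sqrt_pos.mpr pi_pos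
  field_simp
  ring

lemma intB (n : ℕ) {t : ℝ} (ht : 0 < t) :
    ∫ τ in (0:ℝ)..t, τ ^ n * Real.sqrt (t - τ)
      = 2 ^ (n + 1) * ((n ! : ℕ) : ℝ) * t ^ (n + 1) * Real.sqrt t /
        (((2 * n + 3)‼ : ℕ) : ℝ) := by
  have h1 : ∫ τ in (0:ℝ)..t, τ ^ n * Real.sqrt (t - τ)
      = ∫ τ in (0:ℝ)..t, τ ^ (((n:ℝ) + 1) - 1) * (t - τ) ^ ((3/2:ℝ) - 1) := by
    refine intervalIntegral.integral_congr_ae (MeasureTheory.ae_of_all _ fun τ hτ => ?_)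
    rw [Set.uIoc_of_le ht.le] at hτ
    rw [Real.sqrt_eq_rpow (t - τ), ← Real.rpow_natCast τ n,
      show ((n:ℝ) + 1) - 1 = (n:ℝ) by ring, show (3/2:ℝ) - 1 = 1/(2:ℝ) by norm_num]
  rw [h1, real_beta (by positivity) (by norm_num) ht,
    show (n:ℝ) + 1 + 3/2 - 1 = ((n+1:ℕ):ℝ) + (1/2 : ℝ) by push_cast; ring,
    Real.rpow_add ht, Real.rpow_natCast, ← Real.sqrt_eq_rpow,
    show Real.Gamma ((n:ℝ) + 1) = Real.Gamma (((n:ℕ):ℝ) + 1) by norm_num,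
    Real.Gamma_nat_eq_factorial, gamma_3_2]
  have hg := gamma_half (n + 2)
  have hd : ((2 * (n+2) + 1)‼ : ℕ) = (2*n+5) * ((2*n+3)‼) := by
    rw [show 2*(n+2)+1 = (2*n+3)+2 from by ring, Nat.doubleFactorial_add_two]
  rw [hd] at hg
  push_cast at hg
  have hΓ : Real.Gamma ((n:ℝ) + 1 + 3/2) =
      ((2*(n:ℝ)+5) * (((2 * n + 3)‼ : ℕ) : ℝ)) * Real.sqrt π /
        ((2 * ((n:ℝ)+2) + 1) * 2 ^ (n+2)) := by
    rw [eq_div_iff (by positivity)]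
    rw [show (n:ℝ) + 1 + 3/2 = ((n:ℝ)+2) + 1/2 by ring]
    linarith [hg]
  rw [hΓ]
  have h2 : (0:ℝ) < Real.sqrt π := Real.sqrt_pos.mpr pi_pos
  have h3 : (0:ℝ) < (((2 * n + 3)‼ : ℕ) : ℝ) := by positivity
  field_simp
  ring

theorem stmt_19 (h₀ lam : ℝ) (hh₀ : 0 < h₀) (W : ℕ → ℝ → ℝ)
    (hW0 : ∀ t : ℝ, 0 < t → W 0 t = 2 * h₀ / Real.sqrt (π * t))
    (hWn : ∀ n : ℕ, 1 ≤ n → ∀ t : ℝ, 0 < t →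
      W n t = -(2 * lam / (t * Real.sqrt π)) * ∫ τ in (0:ℝ)..t, W (n - 1) τ * Real.sqrt (t - τ)) :
    (∀ t : ℝ, 0 < t → W 1 t = -2 * lam * h₀) ∧
    (∀ n : ℕ, 1 ≤ n → ∀ t : ℝ, 0 < t →
      W (2 * n) t = (2 * h₀ / Real.sqrt (π * t)) *
          ((4 * lam ^ 2 * t) ^ n / ((2 * n + 1) * (n ! : ℝ) * (((2 * n - 1)‼ : ℕ) : ℝ) ^ 2)) ∧
      W (2 * n + 1) t = -2 * lam * h₀ *
          ((2 * lam ^ 2 * t) ^ n / ((n + 1) * (n ! : ℝ) ^ 2 * (((2 * n + 1)‼ : ℕ) : ℝ)))) := by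
  have hπ : (0:ℝ) < Real.sqrt π := Real.sqrt_pos.mpr pi_pos
  have key : ∀ n : ℕ,
      (∀ t : ℝ, 0 < t → W (2*n+1) t =
        -2*lam*h₀ * ((2*lam^2*t)^n / (((n:ℝ)+1) * (n ! : ℝ)^2 * (((2*n+1)‼ : ℕ):ℝ)))) ∧
      (∀ t : ℝ, 0 < t → W (2*n+2) t =
        2*h₀*2^(n+1)*(2*lam^2)^(n+1) /
          ((2*(n:ℝ)+3) * (((n+1)! : ℕ):ℝ) * (((2*n+1)‼ : ℕ):ℝ)^2) *
          (t^(n+1) / Real.sqrt (π*t))) := by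
    intro n
    induction n with
    | zero =>
      have hA : ∀ t : ℝ, 0 < t → W (2*0+1) t =
          -2*lam*h₀ * ((2*lam^2*t)^0 / (((0:ℕ):ℝ)+1) ) := by
        intro t ht
        rw [show (2*0+1 : ℕ) = 1 from rfl, hWn 1 le_rfl t ht]
        have hint : (∫ τ in (0:ℝ)..t, W (1-1) τ * Real.sqrt (t - τ))
            = ∫ τ in (0:ℝ)..t, (2*h₀) * (τ^0 / Real.sqrt (π*τ) * Real.sqrt (t-τ)) := by
          refine intervalIntegral.integral_congr_ae (MeasureTheory.ae_of_all _ fun τ hτ => ?_)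
          rw [Set.uIoc_of_le ht.le] at hτ
          rw [show (1:ℕ)-1 = 0 from rfl, hW0 τ hτ.1]
          ring
        rw [hint, intervalIntegral.integral_const_mul, intA 0 ht]
        norm_num [Nat.doubleFactorial]
        field_simp
      refine ⟨?_, ?_⟩
      · intro t ht
        rw [hA t ht]
        norm_num [Nat.doubleFactorial]
      · intro t ht
        obtain ⟨s, hs0, rfl⟩ : ∃ s:ℝ, 0 < s ∧ t = s^2 :=
          ⟨Real.sqrt t, Real.sqrt_pos.mpr ht, (Real.sq_sqrt ht.le).symm⟩
        rw [show (2*0+2 : ℕ) = 2 from rfl, hWn 2 (by norm_num) (s^2) ht]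
        have hint : (∫ τ in (0:ℝ)..s^2, W (2-1) τ * Real.sqrt (s^2 - τ))
            = ∫ τ in (0:ℝ)..s^2, (-2*lam*h₀) * (τ^0 * Real.sqrt (s^2-τ)) := by
          refine intervalIntegral.integral_congr_ae (MeasureTheory.ae_of_all _ fun τ hτ => ?_)
          rw [Set.uIoc_of_le ht.le] at hτ
          rw [show (2:ℕ)-1 = 2*0+1 from rfl, hA τ hτ.1]
          ring
        rw [hint, intervalIntegral.integral_const_mul, intB 0 ht]
        rw [Real.sqrt_sq hs0.le, Real.sqrt_mul pi_pos.le, Real.sqrt_sq hs0.le]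
        norm_num [Nat.doubleFactorial]
        field_simp
    | succ m ih =>
      obtain ⟨ihA, ihB⟩ := ih
      have c1 : ((m ! : ℕ):ℝ) ≠ 0 := by positivity
      have c2 : (((2*m+1)‼ : ℕ):ℝ) ≠ 0 := by positivity
      have c3 : (((m+1)! : ℕ):ℝ) ≠ 0 := by positivity
      have hdf : (((2*(m+1)+1)‼ : ℕ) : ℝ) = (2*(m:ℝ)+3) * (((2*m+1)‼ : ℕ):ℝ) := by
        rw [show 2*(m+1)+1 = (2*m+1)+2 from by ring, Nat.doubleFactorial_add_two]
        push_cast; ring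
      have hf1 : (((m+1)! : ℕ) : ℝ) = ((m:ℝ)+1) * ((m ! : ℕ):ℝ) := by
        rw [Nat.factorial_succ]; push_cast; ring
      have hf2 : (((m+1+1)! : ℕ) : ℝ) = ((m:ℝ)+2) * (((m+1)! : ℕ):ℝ) := by
        rw [Nat.factorial_succ (m+1)]; push_cast; ring
      have hA : ∀ t : ℝ, 0 < t → W (2*(m+1)+1) t =
          -2*lam*h₀ * ((2*lam^2*t)^(m+1) /
            (((m+1:ℕ):ℝ)+1) / ((m+1)! : ℝ)^2 / (((2*(m+1)+1)‼ : ℕ):ℝ)) := by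
        intro t ht
        rw [hWn (2*(m+1)+1) (by omega) t ht]
        have hint : (∫ τ in (0:ℝ)..t, W (2*(m+1)+1-1) τ * Real.sqrt (t - τ))
            = ∫ τ in (0:ℝ)..t,
              (2*h₀*2^(m+1)*(2*lam^2)^(m+1) /
                ((2*(m:ℝ)+3) * (((m+1)! : ℕ):ℝ) * (((2*m+1)‼ : ℕ):ℝ)^2)) *
              (τ^(m+1) / Real.sqrt (π*τ) * Real.sqrt (t-τ)) := by
          refine intervalIntegral.integral_congr_ae (MeasureTheory.ae_of_all _ fun τ hτ => ?_)
          rw [Set.uIoc_of_le ht.le] at hτ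
          simp only [show 2*(m+1)+1-1 = 2*m+2 from by omega]
          rw [ihB τ hτ.1]
          ring
        rw [hint, intervalIntegral.integral_const_mul, intA (m+1) ht]
        rw [hdf, hf2, hf1]
        push_cast
        field_simp
        ring
      refine ⟨?_, ?_⟩
      · intro t ht
        rw [hA t ht, hdf, hf1]
        push_cast
        field_simp
      · intro t ht
        obtain ⟨s, hs0, rfl⟩ : ∃ s:ℝ, 0 < s ∧ t = s^2 :=
          ⟨Real.sqrt t, Real.sqrt_pos.mpr ht, (Real.sq_sqrt ht.le).symm⟩
        rw [hWn (2*(m+1)+2) (by omega) (s^2) ht]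
        have hint : (∫ τ in (0:ℝ)..s^2, W (2*(m+1)+2-1) τ * Real.sqrt (s^2 - τ))
            = ∫ τ in (0:ℝ)..s^2,
              (-2*lam*h₀ / (((m+1:ℕ):ℝ)+1) / ((m+1)! : ℝ)^2 / (((2*(m+1)+1)‼ : ℕ):ℝ)
                * (2*lam^2)^(m+1)) * (τ^(m+1) * Real.sqrt (s^2-τ)) := by
          refine intervalIntegral.integral_congr_ae (MeasureTheory.ae_of_all _ fun τ hτ => ?_)
          rw [Set.uIoc_of_le ht.le] at hτ
          simp only [show 2*(m+1)+2-1 = 2*(m+1)+1 from by omega]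
          rw [hA τ hτ.1]
          ring
        rw [hint, intervalIntegral.integral_const_mul, intB (m+1) ht]
        have hd2 : (((2*(m+1)+3)‼ : ℕ) : ℝ) = (2*(m:ℝ)+5) * (((2*(m+1)+1)‼ : ℕ):ℝ) := by
          rw [show 2*(m+1)+3 = (2*(m+1)+1)+2 from by ring, Nat.doubleFactorial_add_two]
          push_cast; ring
        rw [Real.sqrt_sq hs0.le, Real.sqrt_mul pi_pos.le, Real.sqrt_sq hs0.le,
          hd2, hdf, hf2, hf1]
        push_cast
        field_simp
        ring
  refine ⟨?_, ?_⟩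
  · intro t ht
    have h := (key 0).1 t ht
    norm_num [Nat.doubleFactorial] at h
    linarith [h]
  · intro n hn t ht
    cases n with
    | zero => omega
    | succ m =>
      constructor
      · have h := (key m).2 t ht
        rw [show 2*(m+1) = 2*m+2 from by ring, h,
          show 2*m+2-1 = 2*m+1 from by omega,
          show (4*lam^2*t:ℝ) = 2*(2*lam^2)*t by ring, mul_pow, mul_pow]
        have hs : Real.sqrt (π*t) ≠ 0 := (Real.sqrt_pos.mpr (mul_pos pi_pos ht)).ne'
        push_cast
        field_simp
        ring_nf
        rw [show (4:ℝ)^m = 2^(m*2) from by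
          rw [show (4:ℝ) = 2^2 by norm_num, ← pow_mul, Nat.mul_comm]]
      · have h := (key (m+1)).1 t ht
        rw [h]
end
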